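/- Let G be a connected finite simple graph with M edges. Among positive bandwidth allocations C : E → ℝ_{>0} with Σ_e C(e) = M, the betweenness-proportional allocation C*(e) = M·B(e)/Σ_f B(f) is the unique maximizer of R_c(C) = min_e 2C(e)N(N-1)/B(e): any allocation C ≠ C* satisfies R_c(C) < 2M/L. -/

import Mathlib

open SimpleGraph Finset

variable {V : Type*}

/-- Number of shortest `u`-`v` paths. -/
noncomputable def numSP (G : SimpleGraph V) (u v : V) : ℕ :=
  Nat.card {p : G.Walk u v // p.IsPath ∧ p.length = G.dist u v}

/-- Number of shortest `u`-`v` paths through edge `e`. -/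
noncomputable def numSPthru (G : SimpleGraph V) (e : Sym2 V) (u v : V) : ℕ :=
  Nat.card {p : G.Walk u v // p.IsPath ∧ p.length = G.dist u v ∧ e ∈ p.edges}

/-- Edge betweenness centrality (sum over ordered pairs of distinct vertices). -/
noncomputable def btw (G : SimpleGraph V) [Fintype V] [DecidableEq V] (e : Sym2 V) : ℝ :=
  ∑ u, ∑ v, if u ≠ v then (numSPthru G e u v : ℝ) / (numSP G u v : ℝ) else 0

/-- Average shortest path length over ordered pairs of distinct vertices. -/
noncomputable def avgL (G : SimpleGraph V) [Fintype V] : ℝ :=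
  (∑ u, ∑ v, (G.dist u v : ℝ)) /
    ((Fintype.card V : ℝ) * ((Fintype.card V : ℝ) - 1))

/-- A routing scheme: a nonempty finite set of simple paths for each ordered
pair of distinct vertices. -/
structure Routing (G : SimpleGraph V) [DecidableEq V] where
  paths : ∀ u v : V, Finset (G.Walk u v)
  nonempty : ∀ u v : V, u ≠ v → (paths u v).Nonempty
  isPath : ∀ u v : V, ∀ p ∈ paths u v, p.IsPath

/-- Effective betweenness of edge `e` under a routing scheme. -/
noncomputable def effBtw (G : SimpleGraph V) [Fintype V] [DecidableEq V]
    (R : Routing G) (e : Sym2 V) : ℝ :=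
  ∑ u, ∑ v, if u ≠ v then
    (((R.paths u v).filter (fun p => e ∈ p.edges)).card : ℝ) /
      ((R.paths u v).card : ℝ) else 0

/-- Average routed path length over ordered pairs of distinct vertices. -/
noncomputable def routeAvgLen (G : SimpleGraph V) [Fintype V] [DecidableEq V]
    (R : Routing G) : ℝ :=
  (∑ u, ∑ v, if u ≠ v then
      (∑ p ∈ R.paths u v, (p.length : ℝ)) / ((R.paths u v).card : ℝ) else 0) /
    ((Fintype.card V : ℝ) * ((Fintype.card V : ℝ) - 1))


section SPF
variable [Fintype V] [DecidableEq V] (G : SimpleGraph V) [DecidableRel G.Adj]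

open Classical in
noncomputable def SPF (u v : V) : Finset (G.Path u v) :=
  Finset.univ.filter (fun p => p.1.length = G.dist u v)

open Classical in
lemma numSP_eq (u v : V) : numSP G u v = (SPF G u v).card := by
  rw [numSP, Nat.card_congr (Equiv.subtypeSubtypeEquivSubtypeInter
    (fun p : G.Walk u v => p.IsPath) (fun p => p.length = G.dist u v)).symm]
  rw [Nat.card_eq_fintype_card, Fintype.card_subtype, SPF]

open Classical in
lemma numSPthru_eq (e : Sym2 V) (u v : V) :
    numSPthru G e u v =
      ((SPF G u v).filter (fun p => e ∈ p.1.edges)).card := by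
  rw [numSPthru, Nat.card_congr (Equiv.subtypeSubtypeEquivSubtypeInter
    (fun p : G.Walk u v => p.IsPath)
    (fun p => p.length = G.dist u v ∧ e ∈ p.edges)).symm]
  rw [Nat.card_eq_fintype_card, Fintype.card_subtype, SPF, Finset.filter_filter]

lemma numSP_pos (hconn : G.Connected) (u v : V) : 0 < numSP G u v := by
  classical
  obtain ⟨p, hp, hl⟩ := hconn.exists_path_of_dist u v
  rw [numSP_eq]
  refine Finset.card_pos.2 ⟨⟨p, hp⟩, ?_⟩
  simp [SPF, hl]

open Classical in
lemma sum_numSPthru (u v : V) :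
    ∑ e ∈ G.edgeFinset, numSPthru G e u v = G.dist u v * numSP G u v := by
  simp only [numSPthru_eq, numSP_eq, Finset.card_filter]
  rw [Finset.sum_comm]
  rw [Finset.card_eq_sum_ones (SPF G u v), Finset.mul_sum]
  refine Finset.sum_congr rfl fun p hp => ?_
  have hlen : p.1.length = G.dist u v := by simpa [SPF] using hp
  have h1 : (∑ e ∈ G.edgeFinset, if e ∈ p.1.edges then 1 else 0) =
      (G.edgeFinset.filter (fun e => e ∈ p.1.edges)).card := by
    rw [Finset.card_filter]
  have h2 : G.edgeFinset.filter (fun e => e ∈ p.1.edges) = p.1.edges.toFinset := by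
    ext e
    simp only [Finset.mem_filter, List.mem_toFinset, SimpleGraph.mem_edgeFinset,
      and_iff_right_iff_imp]
    exact fun he => p.1.edges_subset_edgeSet he
  have h3 : p.1.edges.toFinset.card = p.1.length := by
    rw [List.toFinset_card_of_nodup p.2.edges_nodup, SimpleGraph.Walk.length_edges]
  rw [h1, h2, h3, hlen, mul_one]

lemma btw_nonneg (e : Sym2 V) : 0 ≤ btw G e := by
  refine Finset.sum_nonneg fun u _ => Finset.sum_nonneg fun v _ => ?_
  split <;> positivity

lemma btw_pos (hconn : G.Connected) {e : Sym2 V} (he : e ∈ G.edgeFinset) :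
    0 < btw G e := by
  rw [SimpleGraph.mem_edgeFinset] at he
  induction e with
  | _ a b =>
  rw [SimpleGraph.mem_edgeSet] at he
  set f : V → V → ℝ := fun u v =>
    if u ≠ v then (numSPthru G s(a,b) u v : ℝ) / (numSP G u v : ℝ) else 0 with hf
  have hnonneg : ∀ u v, 0 ≤ f u v := by
    intro u v; dsimp only [f]; split <;> positivity
  have hpos : 0 < f a b := by
    dsimp only [f]
    rw [if_pos he.ne]
    have h1 : (0:ℝ) < numSP G a b := by exact_mod_cast numSP_pos G hconn a b
    have hd : G.dist a b = 1 := SimpleGraph.dist_eq_one_iff_adj.2 he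
    have h2 : 0 < numSPthru G s(a,b) a b := by
      rw [numSPthru_eq]
      refine Finset.card_pos.2 ⟨SimpleGraph.Path.singleton he, ?_⟩
      classical
      simp [SPF, SimpleGraph.Path.singleton, hd]
    have h2' : (0:ℝ) < numSPthru G s(a,b) a b := by exact_mod_cast h2
    positivity
  have h3 : f a b ≤ ∑ v, f a v :=
    Finset.single_le_sum (fun v _ => hnonneg a v) (Finset.mem_univ b)
  have h4 : (∑ v, f a v) ≤ ∑ u, ∑ v, f u v :=
    Finset.single_le_sum (fun u (_ : u ∈ Finset.univ) => Finset.sum_nonneg fun v _ => hnonneg u v)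
      (Finset.mem_univ a)
  have hbtw : btw G s(a,b) = ∑ u, ∑ v, f u v := rfl
  linarith

lemma sum_btw (hconn : G.Connected) :
    ∑ e ∈ G.edgeFinset, btw G e = ∑ u, ∑ v, (G.dist u v : ℝ) := by
  unfold _root_.btw
  rw [Finset.sum_comm]
  refine Finset.sum_congr rfl fun u _ => ?_
  rw [Finset.sum_comm]
  refine Finset.sum_congr rfl fun v _ => ?_
  by_cases h : u = v
  · subst h; simp [SimpleGraph.dist_self]
  · simp only [if_pos h, ne_eq, h, not_false_eq_true, if_true]
    have hnum : (0:ℝ) < numSP G u v := by exact_mod_cast numSP_pos G hconn u v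
    rw [← Finset.sum_div, ← Nat.cast_sum, sum_numSPthru, Nat.cast_mul,
      mul_div_assoc, div_self hnum.ne', mul_one]

end SPF

/-- the betweenness-proportional allocation is the unique
maximizer of R_c; any other allocation gives R_c(C) < 2M/L. -/
theorem stmt4 {V : Type*} [Fintype V] [DecidableEq V] (G : SimpleGraph V)
    [DecidableRel G.Adj] (hconn : G.Connected) (h2 : 2 ≤ Fintype.card V)
    (hne : G.edgeFinset.Nonempty) (C : Sym2 V → ℝ)
    (hpos : ∀ e ∈ G.edgeFinset, 0 < C e)
    (hsum : ∑ e ∈ G.edgeFinset, C e = (G.edgeFinset.card : ℝ))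
    (hdiff : ∃ e ∈ G.edgeFinset,
      C e ≠ (G.edgeFinset.card : ℝ) * btw G e / ∑ f ∈ G.edgeFinset, btw G f) :
    G.edgeFinset.inf' hne (fun e => 2 * C e * ((Fintype.card V : ℝ) * ((Fintype.card V : ℝ) - 1)) / btw G e)
      < 2 * (G.edgeFinset.card : ℝ) / avgL G := by
  classical
  have hP : (0:ℝ) < (Fintype.card V : ℝ) * ((Fintype.card V : ℝ) - 1) := by
    have h2' : (2:ℝ) ≤ (Fintype.card V : ℝ) := by exact_mod_cast h2
    nlinarith
  obtain ⟨e0, he0⟩ := hne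
  have hT : (0:ℝ) < ∑ f ∈ G.edgeFinset, btw G f :=
    lt_of_lt_of_le (btw_pos G hconn he0)
      (Finset.single_le_sum (fun f _ => btw_nonneg G f) he0)
  have havg : avgL G = (∑ f ∈ G.edgeFinset, btw G f) /
      ((Fintype.card V : ℝ) * ((Fintype.card V : ℝ) - 1)) := by
    rw [avgL, sum_btw G hconn]
  have hkey : ∃ e1 ∈ G.edgeFinset,
      C e1 * (∑ f ∈ G.edgeFinset, btw G f) < (G.edgeFinset.card : ℝ) * btw G e1 := by
    by_contra hc
    push_neg at hc
    have hsums : ∑ e ∈ G.edgeFinset, (G.edgeFinset.card : ℝ) * btw G e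
        = ∑ e ∈ G.edgeFinset, C e * (∑ f ∈ G.edgeFinset, btw G f) := by
      rw [← Finset.mul_sum, ← Finset.sum_mul, hsum]
    have hall := (Finset.sum_eq_sum_iff_of_le hc).1 hsums
    obtain ⟨e2, he2, hne2⟩ := hdiff
    apply hne2
    have h := hall e2 he2
    rw [eq_div_iff hT.ne']
    linarith
  obtain ⟨e1, he1, hlt⟩ := hkey
  have hb1 := btw_pos G hconn he1
  refine lt_of_le_of_lt (Finset.inf'_le _ he1) ?_
  rw [havg, div_div_eq_mul_div, div_lt_div_iff₀ hb1 hT]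
  nlinarith [mul_pos hP (sub_pos.2 hlt)]
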